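/- In ℤ/2[x₁,…,xₙ], Q₀(e_j) = Σ_i x_i² · (∂e_j/∂x_i) = e₁e_j + (j+1)e_{j+1}, where e_{n+1} = 0. -/
import Mathlib


open MvPolynomial Finset

section Aux
set_option linter.unusedSectionVars false

variable {σ : Type*} [Fintype σ] [DecidableEq σ] {R : Type*} [CommRing R]

-- pderiv of a squarefree product
lemma pderiv_prod_X (i : σ) (S : Finset σ) :
    pderiv i (∏ k ∈ S, (X k : MvPolynomial σ R)) =
      if i ∈ S then ∏ k ∈ S.erase i, X k else 0 := by
  have h0 : ∀ T : Finset σ, i ∉ T → pderiv i (∏ k ∈ T, (X k : MvPolynomial σ R)) = 0 := by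
    intro T hT
    induction T using Finset.induction_on with
    | empty => simp
    | @insert a s hx ih =>
      rw [Finset.prod_insert hx, pderiv_mul, ih (fun h => hT (Finset.mem_insert_of_mem h)),
        pderiv_X_of_ne (by rintro rfl; exact hT (Finset.mem_insert_self a s))]
      ring
  by_cases hi : i ∈ S
  · rw [if_pos hi, ← Finset.mul_prod_erase S _ hi, pderiv_mul, pderiv_X_self,
      h0 _ (Finset.notMem_erase i S)]
    ring
  · rw [if_neg hi, h0 _ hi]

lemma sumA (j : ℕ) :
    ∑ i : σ, (X i : MvPolynomial σ R) ^ 2 * pderiv i (esymm σ R j) =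
      ∑ S ∈ powersetCard j (univ : Finset σ), (∑ i ∈ S, (X i : MvPolynomial σ R)) * ∏ k ∈ S, X k := by
  simp only [esymm, map_sum, Finset.mul_sum, pderiv_prod_X, mul_ite, mul_zero]
  rw [Finset.sum_comm]
  refine Finset.sum_congr rfl fun S hS => ?_
  rw [Finset.sum_ite_mem, Finset.univ_inter, Finset.sum_mul]
  refine Finset.sum_congr rfl fun i hi => ?_
  rw [sq, mul_assoc, Finset.mul_prod_erase S _ hi]

lemma sumB (j : ℕ) :
    ∑ S ∈ powersetCard j (univ : Finset σ), (∑ i ∈ Sᶜ, (X i : MvPolynomial σ R)) * ∏ k ∈ S, X k =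
      (j + 1) • esymm σ R (j + 1) := by
  have key : ∑ S ∈ powersetCard j (univ : Finset σ), ∑ i ∈ Sᶜ,
      ((X i : MvPolynomial σ R) * ∏ k ∈ S, X k) =
      ∑ T ∈ powersetCard (j+1) (univ : Finset σ), ∑ i ∈ T, ∏ k ∈ T, (X k : MvPolynomial σ R) := by
    rw [Finset.sum_sigma', Finset.sum_sigma']
    refine Finset.sum_nbij' (fun p => ⟨insert p.2 p.1, p.2⟩) (fun p => ⟨p.1.erase p.2, p.2⟩)
      ?_ ?_ ?_ ?_ ?_
    · rintro ⟨S, i⟩ hp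
      simp only [Finset.mem_sigma, Finset.mem_powersetCard_univ, Finset.mem_compl] at hp ⊢
      exact ⟨by rw [Finset.card_insert_of_notMem hp.2, hp.1], Finset.mem_insert_self _ _⟩
    · rintro ⟨T, i⟩ hp
      simp only [Finset.mem_sigma, Finset.mem_powersetCard_univ, Finset.mem_compl] at hp ⊢
      exact ⟨by rw [Finset.card_erase_of_mem hp.2, hp.1]; rfl, Finset.notMem_erase _ _⟩
    · rintro ⟨S, i⟩ hp
      simp only [Finset.mem_sigma, Finset.mem_powersetCard_univ, Finset.mem_compl] at hp
      simp [Finset.erase_insert hp.2]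
    · rintro ⟨T, i⟩ hp
      simp only [Finset.mem_sigma, Finset.mem_powersetCard_univ] at hp
      simp [Finset.insert_erase hp.2]
    · rintro ⟨S, i⟩ hp
      simp only [Finset.mem_sigma, Finset.mem_powersetCard_univ, Finset.mem_compl] at hp
      exact (Finset.prod_insert hp.2).symm
  calc ∑ S ∈ powersetCard j (univ : Finset σ), (∑ i ∈ Sᶜ, (X i : MvPolynomial σ R)) * ∏ k ∈ S, X k
      = ∑ S ∈ powersetCard j (univ : Finset σ), ∑ i ∈ Sᶜ,
          ((X i : MvPolynomial σ R) * ∏ k ∈ S, X k) := by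
        simp only [Finset.sum_mul]
    _ = ∑ T ∈ powersetCard (j+1) (univ : Finset σ), ∑ i ∈ T,
          ∏ k ∈ T, (X k : MvPolynomial σ R) := key
    _ = (j + 1) • esymm σ R (j + 1) := by
        rw [esymm, Finset.smul_sum]
        refine Finset.sum_congr rfl fun T hT => ?_
        rw [Finset.sum_const, Finset.mem_powersetCard_univ.mp hT]

lemma mkDerivation_eq_sum (f : σ → MvPolynomial σ R) (p : MvPolynomial σ R) :
    mkDerivation R f p = ∑ i : σ, f i * pderiv i p := by
  have h : (mkDerivation R f : Derivation R (MvPolynomial σ R) (MvPolynomial σ R)) =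
      ∑ i : σ, f i • pderiv i := by
    apply derivation_ext
    intro k
    rw [mkDerivation_X]
    have : ((∑ i : σ, f i • pderiv i :
        Derivation R (MvPolynomial σ R) (MvPolynomial σ R))) (X k) =
        ∑ i : σ, f i • (pderiv i (X k)) := by
      induction (univ : Finset σ) using Finset.induction_on with
      | empty => simp
      | @insert a s ha ih => simp [Finset.sum_insert ha, ih]
    rw [this]
    rw [Finset.sum_eq_single k (fun i _ hik => by rw [pderiv_X_of_ne (Ne.symm hik), smul_zero])
      (fun h => absurd (Finset.mem_univ k) h)]
    simp [pderiv_X_self]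
  rw [h]
  induction (univ : Finset σ) using Finset.induction_on with
  | empty => simp
  | @insert a s ha ih => simp [Finset.sum_insert ha, ih, smul_eq_mul]

end Aux

/-- The `0`-th Milnor operation: the `ℤ/2`-linear derivation on `ℤ/2[x₁,…,xₙ]`
determined by `Q₀(x_i) = x_i²`. -/
noncomputable def milnorQ0 (n : ℕ) :
    Derivation (ZMod 2) (MvPolynomial (Fin n) (ZMod 2)) (MvPolynomial (Fin n) (ZMod 2)) :=
  MvPolynomial.mkDerivation (ZMod 2) (fun i => X i ^ 2)

/-- In `ℤ/2[x₁,…,xₙ]`: `Q₀(e_j) = Σᵢ xᵢ²·∂e_j/∂xᵢ`, and this equals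
`e₁e_j + (j+1)e_{j+1}` (with `(j+1)` reduced mod 2 and `e_{n+1} = 0`). -/
theorem milnorQ0_esymm_formula (n j : ℕ) :
    milnorQ0 n (MvPolynomial.esymm (Fin n) (ZMod 2) j) =
        ∑ i : Fin n, (X i : MvPolynomial (Fin n) (ZMod 2)) ^ 2 *
          MvPolynomial.pderiv i (MvPolynomial.esymm (Fin n) (ZMod 2) j) ∧
      milnorQ0 n (MvPolynomial.esymm (Fin n) (ZMod 2) j) =
        MvPolynomial.esymm (Fin n) (ZMod 2) 1 * MvPolynomial.esymm (Fin n) (ZMod 2) j +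
          (j + 1) • MvPolynomial.esymm (Fin n) (ZMod 2) (j + 1) := by
  have h1 : milnorQ0 n (MvPolynomial.esymm (Fin n) (ZMod 2) j) =
      ∑ i : Fin n, (X i : MvPolynomial (Fin n) (ZMod 2)) ^ 2 *
        MvPolynomial.pderiv i (MvPolynomial.esymm (Fin n) (ZMod 2) j) :=
    mkDerivation_eq_sum _ _
  refine ⟨h1, ?_⟩
  have hmul : esymm (Fin n) (ZMod 2) 1 * esymm (Fin n) (ZMod 2) j =
      (∑ i : Fin n, (X i : MvPolynomial (Fin n) (ZMod 2)) ^ 2 *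
        pderiv i (esymm (Fin n) (ZMod 2) j)) + (j + 1) • esymm (Fin n) (ZMod 2) (j + 1) := by
    rw [esymm_one, sumA, ← sumB, esymm, Finset.mul_sum, ← Finset.sum_add_distrib]
    refine Finset.sum_congr rfl fun S hS => ?_
    rw [← add_mul, Finset.sum_add_sum_compl]
  rw [h1, hmul, add_assoc,
    CharTwo.add_self_eq_zero ((j + 1) • esymm (Fin n) (ZMod 2) (j + 1)), add_zero]
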